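/- arXiv:2008.13208 — 2 statements merged into one kernel-verified Lean document; each statement's English description precedes it below -/
import Mathlib

section
/- Let K be a field and consider the specialization of coefficients c_{11}^{(1)} = a (a parameter), c_{12}^{(3)} = c_{21}^{(2)} = c_{22}^{(1)} = c_{22}^{(2)} = c_{22}^{(3)} = 1, and all other c_{ij}^{(k)} = 0. Then the determinant of the 6×6 coefficient matrix of the system of linear forms in the variables y_{11}, y_{12}, y_{13}, y_{22}, y_{23}, y_{33} given by the forms F corresponding to det(B) and the minors M_{1,5,9,10}, M_{2,4,9,10}, M_{3,7,9,10}, M_{6,8,9,10}, M_{3,6,9,10} (as in the presentation matrix of the tangent image of B = [f_{ij}]) equals a^7 + a^6 up to sign, which is nonzero for a ∉ {0, -1}. -/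
namespace Stmt4
noncomputable section
open MvPolynomial

variable {K : Type*} [Field K]

/-- The entries of `B` under the specialization `c₁₁⁽¹⁾ = a`,
`c₁₂⁽³⁾ = c₂₁⁽²⁾ = c₂₂⁽¹⁾ = c₂₂⁽²⁾ = c₂₂⁽³⁾ = 1` and all other coefficients `0`
(only the first three variables occur, so we work in `K[x₁,x₂,x₃]`). -/
def f11 (a : K) (N : ℕ) : MvPolynomial (Fin 3) K := C a * X 0 ^ N
def f12 (K : Type*) [Field K] (N : ℕ) : MvPolynomial (Fin 3) K := X 2 ^ N
def f21 (K : Type*) [Field K] (N : ℕ) : MvPolynomial (Fin 3) K := X 1 ^ N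
def f22 (K : Type*) [Field K] (N : ℕ) : MvPolynomial (Fin 3) K :=
  X 0 ^ N + X 1 ^ N + X 2 ^ N

/-- The columns of the presentation matrix `Θ_{(G,B)}`: columns `0`–`3` are
`E_{pq}·B`, columns `4`–`7` are `B·E_{hl}`, and columns `8`, `9` are
`∂B/∂x₁`, `∂B/∂x₂`, all written as vectors in `R⁴` with the row ordering
`(f₁₁, f₂₁, f₁₂, f₂₂)`. -/
def col (a : K) (N : ℕ) : Fin 10 → Fin 4 → MvPolynomial (Fin 3) K :=
  ![![f11 a N, f21 K N, 0, 0],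
    ![f12 K N, f22 K N, 0, 0],
    ![0, 0, f11 a N, f21 K N],
    ![0, 0, f12 K N, f22 K N],
    ![f11 a N, 0, f12 K N, 0],
    ![f21 K N, 0, f22 K N, 0],
    ![0, f11 a N, 0, f12 K N],
    ![0, f21 K N, 0, f22 K N],
    ![pderiv 0 (f11 a N), pderiv 0 (f21 K N), pderiv 0 (f12 K N), pderiv 0 (f22 K N)],
    ![pderiv 1 (f11 a N), pderiv 1 (f21 K N), pderiv 1 (f12 K N), pderiv 1 (f22 K N)]]

/-- The `4 × 4` minor `M_{i₁+1, i₂+1, 9, 10}` of the presentation matrix. -/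
def minor (a : K) (N : ℕ) (i1 i2 : Fin 10) : MvPolynomial (Fin 3) K :=
  Matrix.det (Matrix.of fun r q : Fin 4 => col a N (![i1, i2, 8, 9] q) r)

/-- The variable indices `(i,j)` of `y_{ij}`, ordered
`y₁₁, y₁₂, y₁₃, y₂₂, y₂₃, y₃₃`. -/
def ypair : Fin 6 → Fin 3 × Fin 3 := ![(0,0), (0,1), (0,2), (1,1), (1,2), (2,2)]

/-- The exponent of the monomial `x_i^N x_j^N` corresponding to `y_{ij}`. -/
def mexp (N : ℕ) (q : Fin 6) : Fin 3 →₀ ℕ :=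
  Finsupp.single (ypair q).1 N + Finsupp.single (ypair q).2 N

/-- The exponent of `x₁^{N-1} x₂^{N-1}`, the factor appearing in
`M_{i₁,i₂,9,10} = F · N² x₁^{N-1} x₂^{N-1}`. -/
def d12 (N : ℕ) : Fin 3 →₀ ℕ :=
  Finsupp.single 0 (N - 1) + Finsupp.single 1 (N - 1)

/-- The pairs `(i₁,i₂)` (0-indexed) of the minors
`M_{1,5,9,10}, M_{2,4,9,10}, M_{3,7,9,10}, M_{6,8,9,10}, M_{3,6,9,10}`. -/
def pr : Fin 5 → Fin 10 × Fin 10 := ![(0,4), (1,3), (2,6), (5,7), (2,5)]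

/-- The `6 × 6` coefficient matrix of the system of linear forms in the
variables `y₁₁, y₁₂, y₁₃, y₂₂, y₂₃, y₃₃`: the first row is given by `det B`
(a linear form in the `y_{ij}`, whose `y_{ij}`-coefficient is the coefficient
of `x_i^N x_j^N`), and rows `1`–`5` by the linear forms `F` with
`M_{i₁,i₂,9,10} = F · N² x₁^{N-1} x₂^{N-1}` (so the `y_{ij}`-coefficient of
`F` is `N⁻²` times the coefficient of `x_i^N x_j^N x₁^{N-1} x₂^{N-1}` in the
minor). -/
def sys (a : K) (N : ℕ) : Matrix (Fin 6) (Fin 6) K :=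
  Matrix.of fun r q =>
    if h : r = 0 then
      coeff (mexp N q) (f11 a N * f22 K N - f12 K N * f21 K N)
    else
      ((N : K) ^ 2)⁻¹ *
        coeff (mexp N q + d12 N)
          (minor a N (pr (r.pred h)).1 (pr (r.pred h)).2)

/-!
Each minor `M_{i₁,i₂,9,10}` is `N² x₁^{N-1} x₂^{N-1}` times the linear form `F` evaluated at
`y_{ij} = x_i^N x_j^N`, and so is `det B` without the prefactor. For `N ≠ 0` the monomials
`x_i^N x_j^N` are distinct, so the coefficients of these forms can be read off and `sys a N` is a
fixed matrix in `a`, independent of `N`, whose determinant is computed by cofactor expansion.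
-/

section yForm

variable {R : Type*} [CommSemiring R]

def yForm (N : ℕ) (c : Fin 6 → R) : MvPolynomial (Fin 3) R :=
  ∑ q, monomial (mexp N q) (c q)

lemma mexp_injective {N : ℕ} (hN : N ≠ 0) : Function.Injective (mexp N) := by
  intro q q' h
  have h' (k : Fin 3) := DFunLike.congr_fun h k
  fin_cases q <;> fin_cases q' <;>
    simp [mexp, ypair, Finsupp.single_apply, Fin.forall_fin_succ] at h' ⊢ <;> omega

lemma coeff_mexp_yForm {N : ℕ} (hN : N ≠ 0) (c : Fin 6 → R) (q : Fin 6) :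
    coeff (mexp N q) (yForm N c) = c q := by
  simp [yForm, coeff_sum, coeff_monomial, (mexp_injective hN).eq_iff]

lemma yForm_eq (N : ℕ) (c : Fin 6 → R) :
    yForm N c =
      C (c 0) * X 0 ^ N * X 0 ^ N + C (c 1) * X 0 ^ N * X 1 ^ N + C (c 2) * X 0 ^ N * X 2 ^ N +
        C (c 3) * X 1 ^ N * X 1 ^ N + C (c 4) * X 1 ^ N * X 2 ^ N +
        C (c 5) * X 2 ^ N * X 2 ^ N := by
  simp only [yForm, mexp, Fin.sum_univ_six, X_pow_eq_monomial, C_mul_monomial, monomial_mul,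
    mul_one]
  rfl

lemma monomial_d12 (N : ℕ) (c : R) :
    monomial (d12 N) c = C c * X 0 ^ (N - 1) * X 1 ^ (N - 1) := by
  simp only [d12, X_pow_eq_monomial, C_mul_monomial, monomial_mul, mul_one]

end yForm

def coeffMatrix {R : Type*} [CommRing R] (a : R) : Matrix (Fin 6) (Fin 6) R :=
  !![a, a, a, 0, -1, 0;
     0, 0, a, 0, a, 0;
     0, 0, a, 0, a, 1 + a;
     -a ^ 3, 0, a ^ 2, 0, 0, 0;
     a, a, 2 * a, 0, a, a;
     0, -2 * a, 0, -a, -a, 0]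

lemma det_coeffMatrix {R : Type*} [CommRing R] (a : R) :
    (coeffMatrix a).det = a ^ 7 + a ^ 6 := by
  simp [coeffMatrix, Matrix.det_succ_row_zero, Fin.sum_univ_succ, Fin.succAbove]
  ring

lemma detB_eq_yForm (a : K) (N : ℕ) :
    f11 a N * f22 K N - f12 K N * f21 K N = yForm N (coeffMatrix a 0) := by
  simp [yForm_eq, coeffMatrix, f11, f12, f21, f22]
  ring

lemma minor_pr_eq_monomial_mul_yForm (a : K) (N : ℕ) (r : Fin 5) :
    minor a N (pr r).1 (pr r).2 =
      monomial (d12 N) ((N : K) ^ 2) * yForm N (coeffMatrix a r.succ) := by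
  rw [yForm_eq, monomial_d12]
  fin_cases r <;>
    simp [minor, pr, col, coeffMatrix, Matrix.det_succ_row_zero, Fin.sum_univ_succ,
      Fin.succAbove, f11, f12, f21, f22, map_ofNat] <;>
    ring

lemma sys_eq_coeffMatrix (a : K) {N : ℕ} (hN : (N : K) ≠ 0) : sys a N = coeffMatrix a := by
  have hN₀ : N ≠ 0 := by rintro rfl; simp at hN
  ext r q
  induction r using Fin.cases with
  | zero => rw [sys, Matrix.of_apply, dif_pos rfl, detB_eq_yForm, coeff_mexp_yForm hN₀]
  | succ r =>
    rw [sys, Matrix.of_apply, dif_neg r.succ_ne_zero, Fin.pred_succ,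
      minor_pr_eq_monomial_mul_yForm, add_comm (mexp N q), coeff_monomial_mul,
      coeff_mexp_yForm hN₀, inv_mul_cancel_left₀ (pow_ne_zero 2 hN)]

theorem det_sys_general (a : K) (N : ℕ) (hchar : (N : K) ≠ 0) :
    (Matrix.det (sys a N) = a ^ 7 + a ^ 6 ∨
      Matrix.det (sys a N) = -(a ^ 7 + a ^ 6)) ∧
    (a ≠ 0 → a ≠ -1 → Matrix.det (sys a N) ≠ 0) := by
  have hdet : (sys a N).det = a ^ 7 + a ^ 6 := by
    rw [sys_eq_coeffMatrix a hchar, det_coeffMatrix]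
  refine ⟨Or.inl hdet, fun ha ha' => ?_⟩
  rw [hdet, show a ^ 7 + a ^ 6 = a ^ 6 * (a + 1) by ring]
  exact mul_ne_zero (pow_ne_zero 6 ha) (by rwa [Ne, add_eq_zero_iff_eq_neg])

/-- The determinant of the `6 × 6` coefficient matrix of the system equals
`a⁷ + a⁶` up to sign; in particular it is nonzero for `a ∉ {0, -1}`. -/
theorem det_sys (a : K) (N : ℕ) (hN : 2 ≤ N) (hchar : (N : K) ≠ 0) :
    (Matrix.det (sys a N) = a ^ 7 + a ^ 6 ∨
      Matrix.det (sys a N) = -(a ^ 7 + a ^ 6)) ∧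
    (a ≠ 0 → a ≠ -1 → Matrix.det (sys a N) ≠ 0) :=
  det_sys_general a N hchar

end
end Stmt4
end

section
/- Let K be a field, R = K[[x_1,...,x_s]] with maximal ideal 𝔪, and A ∈ M_{m,n}. Define the extended tangent image T̃^e_A(GA) as the R-submodule of M_{m,n} generated by the matrices E_{m,pq}·A (p,q = 1,...,m), A·E_{n,hl} (h,l = 1,...,n), and ∂A/∂x_ν (ν = 1,...,s), and the tangent image T̃_A(GA) as the submodule generated by E_{m,pq}·A, A·E_{n,hl}, and 𝔪·∂A/∂x_ν. Then dim_K(M_{m,n}/T̃^e_A(GA)) < ∞ if and only if dim_K(𝔪·M_{m,n}/T̃_A(GA)) < ∞. -/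
/-! A finitely generated `R`-module that is finite-dimensional over `K` is Artinian and
Noetherian, so the chain `𝔪ᵏ • M` stabilises and Nakayama's lemma makes it vanish; conversely
`M ⧸ 𝔪ᵏ • M` is finite-dimensional. Hence both quotients are finite-dimensional exactly when the
submodule contains some `𝔪ᵏ • M_{m,n}`, and since `T̃ ⊆ T̃ᵉ` and `𝔪 • T̃ᵉ ⊆ T̃`, the exponents
for `T̃ᵉ` and `T̃` differ by at most one. -/

noncomputable section
namespace FDM

/-- The partial derivative `∂/∂x_i` on `K[[x_1,…,x_s]]`. -/
def pd {K : Type*} [Field K] {s : ℕ} (i : Fin s)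
    (f : MvPowerSeries (Fin s) K) : MvPowerSeries (Fin s) K :=
  fun e => (e i + 1) • MvPowerSeries.coeff (e + Finsupp.single i 1) f

/-- The maximal ideal `𝔪 = ⟨x_1,…,x_s⟩` of `K[[x_1,…,x_s]]`. -/
def mI (K : Type*) [Field K] (s : ℕ) : Ideal (MvPowerSeries (Fin s) K) :=
  RingHom.ker (MvPowerSeries.constantCoeff (σ := Fin s) (R := K))

variable {K : Type*} [Field K] {s m n : ℕ}

/-- The extended tangent image `T̃ᵉ_A(GA)`: the `R`-submodule of `M_{m,n}`
generated by the `E_{m,pq}·A`, the `A·E_{n,hl}`, and the `∂A/∂x_ν`. -/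
def Text (A : Matrix (Fin m) (Fin n) (MvPowerSeries (Fin s) K)) :
    Submodule (MvPowerSeries (Fin s) K)
      (Matrix (Fin m) (Fin n) (MvPowerSeries (Fin s) K)) :=
  Submodule.span _
    ((Set.range fun pq : Fin m × Fin m => Matrix.single pq.1 pq.2 (1 : MvPowerSeries (Fin s) K) * A) ∪
     (Set.range fun hl : Fin n × Fin n => A * Matrix.single hl.1 hl.2 (1 : MvPowerSeries (Fin s) K)) ∪
     (Set.range fun ν : Fin s => A.map (pd ν)))

/-- The tangent image `T̃_A(GA)`: the `R`-submodule of `M_{m,n}` generated by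
the `E_{m,pq}·A`, the `A·E_{n,hl}`, and `𝔪·⟨∂A/∂x_ν⟩`. -/
def T (A : Matrix (Fin m) (Fin n) (MvPowerSeries (Fin s) K)) :
    Submodule (MvPowerSeries (Fin s) K)
      (Matrix (Fin m) (Fin n) (MvPowerSeries (Fin s) K)) :=
  Submodule.span _
    ((Set.range fun pq : Fin m × Fin m => Matrix.single pq.1 pq.2 (1 : MvPowerSeries (Fin s) K) * A) ∪
     (Set.range fun hl : Fin n × Fin n => A * Matrix.single hl.1 hl.2 (1 : MvPowerSeries (Fin s) K))) +
  mI K s • Submodule.span _ (Set.range fun ν : Fin s => A.map (pd ν))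

/-- The submodule `𝔪·M_{m,n}`. -/
def mM (K : Type*) [Field K] (s m n : ℕ) :
    Submodule (MvPowerSeries (Fin s) K)
      (Matrix (Fin m) (Fin n) (MvPowerSeries (Fin s) K)) :=
  mI K s • ⊤

open Submodule

section FiniteColength

variable {R M : Type*} [CommRing R] [AddCommGroup M] [Module R M]

theorem exists_pow_smul_top_eq_bot {V : Type*} [AddCommGroup V] [Module R V]
    [IsNoetherian R V] [IsArtinian R V] {I : Ideal R} (hI : I ≤ (⊥ : Ideal R).jacobson) :
    ∃ n, I ^ n • (⊤ : Submodule R V) = ⊥ := by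
  have hanti : Antitone fun n : ℕ => I ^ n • (⊤ : Submodule R V) :=
    fun _ _ h => pow_smul_top_le I V h
  obtain ⟨n, hn⟩ := IsArtinian.monotone_stabilizes ⟨_, hanti⟩
  refine ⟨n, eq_bot_of_le_smul_of_le_jacobson_bot I _ (IsNoetherian.noetherian _)
    (le_of_eq ?_) hI⟩
  calc I ^ n • ⊤ = I ^ (n + 1) • (⊤ : Submodule R V) := hn (n + 1) n.le_succ
    _ = I • I ^ n • ⊤ := by rw [pow_succ', mul_smul]

theorem smul_top_quotient_eq_bot_iff {J : Ideal R} {N : Submodule R M} :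
    J • (⊤ : Submodule R (M ⧸ N)) = ⊥ ↔ J • ⊤ ≤ N := by
  rw [← N.range_mkQ, ← Submodule.map_top, ← map_smul'', ← le_bot_iff, map_le_iff_le_comap,
    comap_bot, ker_mkQ]

theorem smul_top_le_comap_subtype_iff {J : Ideal R} {P N : Submodule R M} :
    J • ⊤ ≤ N.comap P.subtype ↔ J • P ≤ N := by
  rw [← map_le_iff_le_comap, map_smul'', map_subtype_top]

variable {k : Type*} [CommRing k] [Algebra k R]

theorem finite_quotient_pow {I : Ideal R} (hI : I.FG) [Module.Finite k (R ⧸ I)] (n : ℕ) :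
    Module.Finite k (R ⧸ I ^ n) := by
  rcases Nat.eq_zero_or_pos n with rfl | hn
  · rw [pow_zero, Ideal.one_eq_top]
    infer_instance
  have hle : I ^ n ≤ I := Ideal.pow_le_self hn.ne'
  have hker : RingHom.ker (Ideal.Quotient.factorₐ k hle) = I.map (Ideal.Quotient.mk (I ^ n)) :=
    Ideal.Quotient.factor_ker hle
  refine Module.finite_of_surjective_of_ker_le_nilradical (Ideal.Quotient.factorₐ k hle)
    (Ideal.Quotient.factor_surjective hle) ?_ (hker ▸ hI.map _)
  rw [hker, Ideal.map_le_iff_le_comap]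
  intro x hx
  exact ⟨n, by simpa [← map_pow, Ideal.Quotient.eq_zero_iff_mem] using Ideal.pow_mem_pow hx n⟩

theorem finite_quotient_pow_smul_top [Module k M] [IsScalarTower k R M] [Module.Finite R M]
    {I : Ideal R} (hI : I.FG) [Module.Finite k (R ⧸ I)] (n : ℕ) :
    Module.Finite k (M ⧸ I ^ n • (⊤ : Submodule R M)) :=
  have := finite_quotient_pow (k := k) hI n
  .trans (R ⧸ I ^ n) _

variable [IsNoetherianRing R] [Algebra K R] [Module K M] [IsScalarTower K R M] [Module.Finite R M]
  {I : Ideal R} [Module.Finite K (R ⧸ I)]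

theorem finite_quotient_iff_exists_pow_smul_top_le (hI : I ≤ (⊥ : Ideal R).jacobson)
    (N : Submodule R M) : Module.Finite K (M ⧸ N) ↔ ∃ n, I ^ n • ⊤ ≤ N := by
  constructor
  · intro
    have : IsArtinian R (M ⧸ N) := isArtinian_of_tower K inferInstance
    obtain ⟨n, hn⟩ := exists_pow_smul_top_eq_bot (V := M ⧸ N) hI
    exact ⟨n, smul_top_quotient_eq_bot_iff.mp hn⟩
  · rintro ⟨n, hn⟩
    have := finite_quotient_pow_smul_top (k := K) (M := M) (IsNoetherian.noetherian I) n
    exact Module.Finite.of_surjective ((factor hn).restrictScalars K) (factor_surjective hn)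

theorem finite_quotient_iff_finite_smul_top_quotient (hI : I ≤ (⊥ : Ideal R).jacobson)
    {N N' : Submodule R M} (hle : N ≤ N') (hsmul : I • N' ≤ N) :
    Module.Finite K (M ⧸ N') ↔
      Module.Finite K
        (↥(I • ⊤ : Submodule R M) ⧸ N.comap (I • ⊤ : Submodule R M).subtype) := by
  rw [finite_quotient_iff_exists_pow_smul_top_le hI, finite_quotient_iff_exists_pow_smul_top_le hI]
  simp only [smul_top_le_comap_subtype_iff, ← mul_smul, ← pow_succ]
  constructor
  · rintro ⟨n, hn⟩
    exact ⟨n, by rw [pow_succ', mul_smul]; exact (smul_mono_right I hn).trans hsmul⟩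
  · rintro ⟨n, hn⟩
    exact ⟨n + 1, hn.trans hle⟩

end FiniteColength

open MvPowerSeries

theorem mI_le_jacobson_bot : mI K s ≤ (⊥ : Ideal (MvPowerSeries (Fin s) K)).jacobson := by
  rw [IsLocalRing.jacobson_eq_maximalIdeal ⊥ bot_ne_top]
  intro f hf hu
  rw [isUnit_iff_constantCoeff] at hu
  exact not_isUnit_zero (hf ▸ hu)

instance : Module.Finite K (MvPowerSeries (Fin s) K ⧸ mI K s) := by
  refine Module.Finite.of_surjective (Algebra.linearMap K _) fun q => ?_
  obtain ⟨f, rfl⟩ := Ideal.Quotient.mk_surjective q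
  refine ⟨constantCoeff f, ?_⟩
  rw [Algebra.linearMap_apply, ← Ideal.Quotient.mk_algebraMap, Ideal.Quotient.eq, mI,
    RingHom.mem_ker, map_sub, ← c_eq_algebraMap, constantCoeff_C, sub_self]

theorem T_le_Text (A : Matrix (Fin m) (Fin n) (MvPowerSeries (Fin s) K)) : T A ≤ Text A := by
  rw [Text, span_union, T, Submodule.add_eq_sup]
  exact sup_le_sup_left smul_le_right _

theorem smul_Text_le_T (A : Matrix (Fin m) (Fin n) (MvPowerSeries (Fin s) K)) :
    mI K s • Text A ≤ T A := by
  rw [Text, span_union, smul_sup, T, Submodule.add_eq_sup]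
  exact sup_le_sup_right smul_le_right _

theorem finiteness_equiv_general (A : Matrix (Fin m) (Fin n) (MvPowerSeries (Fin s) K)) :
    FiniteDimensional K
        (Matrix (Fin m) (Fin n) (MvPowerSeries (Fin s) K) ⧸ Text A) ↔
      FiniteDimensional K
        (↥(mM K s m n) ⧸ Submodule.comap (mM K s m n).subtype (T A)) :=
  finite_quotient_iff_finite_smul_top_quotient mI_le_jacobson_bot (T_le_Text A) (smul_Text_le_T A)

theorem finiteness_equiv (A : Matrix (Fin m) (Fin n) (MvPowerSeries (Fin s) K))
    (hA : ∀ i j, A i j ∈ mI K s) :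
    FiniteDimensional K
        (Matrix (Fin m) (Fin n) (MvPowerSeries (Fin s) K) ⧸ Text A) ↔
      FiniteDimensional K
        (↥(mM K s m n) ⧸ Submodule.comap (mM K s m n).subtype (T A)) :=
  finiteness_equiv_general A

end FDM
end
end
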